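/- arXiv:2006.13021 — 2 statements merged into one kernel-verified Lean document; each statement's English description precedes it below -/
import Mathlib

section
/- Let 1 ≤ r < s ≤ ∞. Let (f_k) be a sequence in L¹(𝕋, ℂ) with ‖f_k‖_{L¹} + ‖f̂_k‖_{ℓ^r(ℤ)} ≤ 1 for all k, and let f ∈ L¹(𝕋, ℂ) with f̂ ∈ ℓ^s(ℤ) be such that ‖f_k − f‖_{L¹} + ‖f̂_k − f̂‖_{ℓ^s(ℤ)} → 0 as k → ∞. Then f̂ ∈ ℓ^r(ℤ) and ‖f‖_{L¹} + ‖f̂‖_{ℓ^r(ℤ)} ≤ 1. -/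
open MeasureTheory Filter Topology AddCircle
open scoped ENNReal

/-- The `n`-th Fourier coefficient `f̂(n) = ∫ f(t)·exp(-2πint) dt` of a
function on the circle `𝕋 = ℝ/ℤ` with normalized Haar measure. -/
noncomputable def fourierCoeff' (f : AddCircle (1 : ℝ) → ℂ) (n : ℤ) : ℂ :=
  ∫ t, f t * (fourier (-n)) t ∂(haarAddCircle : Measure (AddCircle (1 : ℝ)))

/-
Pass to the limit in `‖f_k‖_{L¹} + ‖f̂_k‖_{ℓ^r} ≤ 1` by lower semicontinuity of each
summand. For the `L¹` part this is the triangle inequality. For the `ℓ^r` part,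
`|f̂_k(n) - ĝ(n)| ≤ ‖f_k - g‖_{L¹}` gives pointwise convergence of the Fourier coefficients,
so Fatou's lemma for the counting measure applies.
-/

theorem ENNReal.liminf_add_liminf_le_liminf_add (u v : ℕ → ℝ≥0∞) :
    atTop.liminf u + atTop.liminf v ≤ atTop.liminf (u + v) := by
  simp only [liminf_eq_iSup_iInf_of_nat]
  rw [ENNReal.iSup_add_iSup_of_monotone]
  · exact iSup_mono fun n => le_iInf₂ fun i hi =>
      add_le_add (iInf₂_le i hi) (iInf₂_le i hi)
  all_goals exact fun m n hmn => iInf₂_mono' fun i hi => ⟨i, hmn.trans hi, le_rfl⟩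

theorem eLpNorm_le_liminf_of_tendsto_eLpNorm_sub {α E : Type*} [MeasurableSpace α]
    {μ : Measure α} [NormedAddCommGroup E] {p : ℝ≥0∞} (hp : 1 ≤ p) {f : ℕ → α → E} {g : α → E}
    (hf : ∀ k, AEStronglyMeasurable (f k) μ) (hg : AEStronglyMeasurable g μ)
    (hlim : Tendsto (fun k => eLpNorm (f k - g) p μ) atTop (𝓝 0)) :
    eLpNorm g p μ ≤ atTop.liminf fun k => eLpNorm (f k) p μ := by
  have hle : ∀ k, eLpNorm g p μ ≤ eLpNorm (f k - g) p μ + eLpNorm (f k) p μ := fun k => by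
    rw [add_comm]
    simpa using eLpNorm_sub_le (hf k) ((hf k).sub hg) hp
  calc eLpNorm g p μ ≤ atTop.liminf (fun k => eLpNorm (f k - g) p μ + eLpNorm (f k) p μ) :=
        le_liminf_of_le (by isBoundedDefault) (.of_forall hle)
    _ = atTop.liminf fun k => eLpNorm (f k) p μ :=
        ENNReal.liminf_add_of_left_tendsto_zero hlim _

theorem enorm_fourierCoeff'_le_eLpNorm_one (f : AddCircle (1 : ℝ) → ℂ) (n : ℤ) :
    ‖fourierCoeff' f n‖ₑ ≤ eLpNorm f 1 haarAddCircle := by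
  rw [eLpNorm_one_eq_lintegral_enorm]
  refine (enorm_integral_le_lintegral_enorm _).trans (lintegral_mono fun t => ?_)
  rw [enorm_mul, ← ofReal_norm (fourier _ t), fourier_apply, Circle.norm_coe]
  simp

theorem fourierCoeff'_sub {f g : AddCircle (1 : ℝ) → ℂ} (hf : Integrable f haarAddCircle)
    (hg : Integrable g haarAddCircle) (n : ℤ) :
    fourierCoeff' (f - g) n = fourierCoeff' f n - fourierCoeff' g n := by
  have hchar : ∀ h : AddCircle (1 : ℝ) → ℂ, Integrable h haarAddCircle →
      Integrable (fun t => h t * fourier (-n) t) haarAddCircle := fun h hh =>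
    hh.mul_bdd (map_continuous _).aestronglyMeasurable (.of_forall fun t => (Circle.norm_coe _).le)
  simp only [fourierCoeff', Pi.sub_apply, sub_mul]
  exact integral_sub (hchar f hf) (hchar g hg)

theorem tendsto_fourierCoeff'_of_tendsto_eLpNorm_sub {f : ℕ → AddCircle (1 : ℝ) → ℂ}
    {g : AddCircle (1 : ℝ) → ℂ} (hf : ∀ k, Integrable (f k) haarAddCircle)
    (hg : Integrable g haarAddCircle)
    (hlim : Tendsto (fun k => eLpNorm (f k - g) 1 haarAddCircle) atTop (𝓝 0)) (n : ℤ) :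
    Tendsto (fun k => fourierCoeff' (f k) n) atTop (𝓝 (fourierCoeff' g n)) := by
  rw [tendsto_iff_edist_tendsto_0]
  refine tendsto_of_tendsto_of_tendsto_of_le_of_le tendsto_const_nhds hlim (fun _ => zero_le)
    fun k => ?_
  rw [edist_eq_enorm_sub, ← fourierCoeff'_sub (hf k) hg]
  exact enorm_fourierCoeff'_le_eLpNorm_one _ n

theorem A2r_unit_ball_closed_in_A2s_general
    (r s : ℝ≥0∞)
    (f : ℕ → AddCircle (1 : ℝ) → ℂ)
    (hf : ∀ k, Integrable (f k) (haarAddCircle : Measure (AddCircle (1 : ℝ))))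
    (hball : ∀ k,
      eLpNorm (f k) 1 (haarAddCircle : Measure (AddCircle (1 : ℝ))) +
        eLpNorm (fun n : ℤ => fourierCoeff' (f k) n) r Measure.count ≤ 1)
    (g : AddCircle (1 : ℝ) → ℂ)
    (hg : Integrable g (haarAddCircle : Measure (AddCircle (1 : ℝ))))
    (hconv : Tendsto (fun k =>
        eLpNorm (f k - g) 1 (haarAddCircle : Measure (AddCircle (1 : ℝ))) +
          eLpNorm (fun n : ℤ => fourierCoeff' (f k) n - fourierCoeff' g n) s
            Measure.count)
      atTop (𝓝 0)) :
    eLpNorm (fun n : ℤ => fourierCoeff' g n) r Measure.count < ⊤ ∧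
    eLpNorm g 1 (haarAddCircle : Measure (AddCircle (1 : ℝ))) +
      eLpNorm (fun n : ℤ => fourierCoeff' g n) r Measure.count ≤ 1 := by
  have hL1 : Tendsto (fun k => eLpNorm (f k - g) 1 haarAddCircle) atTop (𝓝 0) :=
    tendsto_of_tendsto_of_tendsto_of_le_of_le tendsto_const_nhds hconv (fun _ => zero_le)
      fun _ => le_self_add
  have hg_L1 := eLpNorm_le_liminf_of_tendsto_eLpNorm_sub le_rfl (fun k => (hf k).1) hg.1 hL1
  have hg_coeff : eLpNorm (fun n : ℤ => fourierCoeff' g n) r Measure.count ≤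
      atTop.liminf fun k => eLpNorm (fun n : ℤ => fourierCoeff' (f k) n) r Measure.count :=
    Lp.eLpNorm_lim_le_liminf_eLpNorm (fun _ => (measurable_of_countable _).aestronglyMeasurable) _
      (.of_forall (tendsto_fourierCoeff'_of_tendsto_eLpNorm_sub hf hg hL1))
  have hmain : eLpNorm g 1 haarAddCircle +
      eLpNorm (fun n : ℤ => fourierCoeff' g n) r Measure.count ≤ 1 :=
    calc _ ≤ (atTop.liminf fun k => eLpNorm (f k) 1 haarAddCircle) +
          atTop.liminf fun k => eLpNorm (fun n : ℤ => fourierCoeff' (f k) n) r Measure.count :=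
          add_le_add hg_L1 hg_coeff
      _ ≤ atTop.liminf fun k => eLpNorm (f k) 1 haarAddCircle +
          eLpNorm (fun n : ℤ => fourierCoeff' (f k) n) r Measure.count :=
          ENNReal.liminf_add_liminf_le_liminf_add _ _
      _ ≤ 1 := liminf_le_of_frequently_le' (.of_forall hball)
  exact ⟨(le_add_self.trans hmain).trans_lt ENNReal.one_lt_top, hmain⟩

/-- (`1 ≤ r < s ≤ ∞`) if `(f_k)` lies in the closed unit ball of
`A_2^r(ℤ)`, i.e. `‖f_k‖_{L¹(𝕋)} + ‖f̂_k‖_{ℓ^r(ℤ)} ≤ 1`, and `f ∈ L¹(𝕋)` with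
`f̂ ∈ ℓ^s(ℤ)` satisfies `‖f_k - f‖_{L¹} + ‖f̂_k - f̂‖_{ℓ^s} → 0`, then
`f̂ ∈ ℓ^r(ℤ)` and `‖f‖_{L¹} + ‖f̂‖_{ℓ^r} ≤ 1` (the identity
`A_2^r(ℤ) → A_2^s(ℤ)` is a semi-embedding). Here the `ℓ^t(ℤ)` norm is realized
as the `L^t` norm for the counting measure on `ℤ`. -/
theorem A2r_unit_ball_closed_in_A2s
    (r s : ℝ≥0∞) (hr : 1 ≤ r) (hrs : r < s)
    (f : ℕ → AddCircle (1 : ℝ) → ℂ)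
    (hf : ∀ k, Integrable (f k) (haarAddCircle : Measure (AddCircle (1 : ℝ))))
    (hball : ∀ k,
      eLpNorm (f k) 1 (haarAddCircle : Measure (AddCircle (1 : ℝ))) +
        eLpNorm (fun n : ℤ => fourierCoeff' (f k) n) r Measure.count ≤ 1)
    (g : AddCircle (1 : ℝ) → ℂ)
    (hg : Integrable g (haarAddCircle : Measure (AddCircle (1 : ℝ))))
    (hgs : eLpNorm (fun n : ℤ => fourierCoeff' g n) s Measure.count < ⊤)
    (hconv : Tendsto (fun k =>
        eLpNorm (f k - g) 1 (haarAddCircle : Measure (AddCircle (1 : ℝ))) +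
          eLpNorm (fun n : ℤ => fourierCoeff' (f k) n - fourierCoeff' g n) s
            Measure.count)
      atTop (𝓝 0)) :
    eLpNorm (fun n : ℤ => fourierCoeff' g n) r Measure.count < ⊤ ∧
    eLpNorm g 1 (haarAddCircle : Measure (AddCircle (1 : ℝ))) +
      eLpNorm (fun n : ℤ => fourierCoeff' g n) r Measure.count ≤ 1 :=
  A2r_unit_ball_closed_in_A2s_general r s f hf hball g hg hconv
end

section
/- Let (α, μ) be a measure space, let 1 ≤ q < ∞ and 1 ≤ r < s ≤ ∞. Let (v_k) be a sequence of measurable functions with ‖v_k‖_{L^q} + ‖v_k‖_{L^r} ≤ 1 for all k, and let w be a measurable function with ‖w‖_{L^s} < ∞ such that ‖v_k − w‖_{L^q} + ‖v_k − w‖_{L^s} → 0 as k → ∞. Then w ∈ L^r(μ) and ‖w‖_{L^q} + ‖w‖_{L^r} ≤ 1. In other words, the identity map from L^q ∩ L^r (with the sum norm) to L^q ∩ L^s (with the sum norm) maps the closed unit ball onto a closed set, i.e. it is a semi-embedding. -/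
open MeasureTheory Filter Topology
open scoped ENNReal

/-!
Convergence in `L^q` with `q ≠ 0` implies convergence in measure, hence a subsequence of `v k`
converges to `w` almost everywhere. Fatou's lemma for `eLpNorm` then bounds `‖w‖_q + ‖w‖_r` by
the liminf of `‖v k‖_q + ‖v k‖_r ≤ 1` along that subsequence; in particular `‖w‖_r < ∞`.
-/

theorem ENNReal.liminf_add_liminf_le {ι : Type*} (f : Filter ι) (u v : ι → ℝ≥0∞) :
    liminf u f + liminf v f ≤ liminf (u + v) f := by
  simp only [liminf_eq_iSup_iInf]
  refine ENNReal.biSup_add_biSup_le' ⟨_, univ_mem⟩ ⟨_, univ_mem⟩ fun s hs t ht => ?_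
  refine le_iSup₂_of_le (s ∩ t) (inter_mem hs ht) (le_iInf₂ fun i hi => ?_)
  exact add_le_add (iInf₂_le i hi.1) (iInf₂_le i hi.2)

theorem MeasureTheory.TendstoInMeasure.eLpNorm_add_eLpNorm_le {α E : Type*}
    [MeasurableSpace α] {μ : Measure α} [NormedAddCommGroup E] {f : ℕ → α → E} {g : α → E}
    (hfg : TendstoInMeasure μ f atTop g) (hf : ∀ n, AEStronglyMeasurable (f n) μ)
    {p p' C : ℝ≥0∞} (hC : ∀ n, eLpNorm (f n) p μ + eLpNorm (f n) p' μ ≤ C) :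
    eLpNorm g p μ + eLpNorm g p' μ ≤ C := by
  obtain ⟨ns, -, hae⟩ := hfg.exists_seq_tendsto_ae
  have fatou (p : ℝ≥0∞) : eLpNorm g p μ ≤ atTop.liminf fun n => eLpNorm (f (ns n)) p μ :=
    Lp.eLpNorm_lim_le_liminf_eLpNorm (fun n => hf (ns n)) g hae
  calc eLpNorm g p μ + eLpNorm g p' μ
      ≤ (atTop.liminf fun n => eLpNorm (f (ns n)) p μ) +
          atTop.liminf fun n => eLpNorm (f (ns n)) p' μ := add_le_add (fatou p) (fatou p')
    _ ≤ atTop.liminf fun n => eLpNorm (f (ns n)) p μ + eLpNorm (f (ns n)) p' μ :=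
        ENNReal.liminf_add_liminf_le _ _ _
    _ ≤ C := liminf_le_of_frequently_le' (Frequently.of_forall fun n => hC (ns n))

theorem Lq_inter_Lr_unit_ball_closed_in_Lq_inter_Ls_general
    {α : Type*} [MeasurableSpace α] (μ : Measure α)
    (q r s : ℝ≥0∞) (hq : 1 ≤ q)
    (v : ℕ → α → ℝ) (hv : ∀ k, AEStronglyMeasurable (v k) μ)
    (hball : ∀ k, eLpNorm (v k) q μ + eLpNorm (v k) r μ ≤ 1)
    (w : α → ℝ) (hw : AEStronglyMeasurable w μ)
    (hconv : Tendsto (fun k => eLpNorm (v k - w) q μ + eLpNorm (v k - w) s μ)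
      atTop (𝓝 0)) :
    eLpNorm w r μ < ⊤ ∧ eLpNorm w q μ + eLpNorm w r μ ≤ 1 := by
  have hconv_q : Tendsto (fun k => eLpNorm (v k - w) q μ) atTop (𝓝 0) :=
    tendsto_of_tendsto_of_tendsto_of_le_of_le tendsto_const_nhds hconv (fun _ => zero_le)
      (fun _ => le_self_add)
  have hmeas : TendstoInMeasure μ v atTop w :=
    tendstoInMeasure_of_tendsto_eLpNorm (zero_lt_one.trans_le hq).ne' hv hw hconv_q
  have hsum := hmeas.eLpNorm_add_eLpNorm_le hv hball
  exact ⟨(le_add_self.trans hsum).trans_lt ENNReal.one_lt_top, hsum⟩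

/-- let `(α, μ)` be a measure space, `1 ≤ q < ∞` and
`1 ≤ r < s ≤ ∞`. If `(v_k)` is a sequence of measurable functions with
`‖v_k‖_{L^q} + ‖v_k‖_{L^r} ≤ 1`, and `w` is measurable with `‖w‖_{L^s} < ∞`
and `‖v_k - w‖_{L^q} + ‖v_k - w‖_{L^s} → 0`, then `w ∈ L^r` and
`‖w‖_{L^q} + ‖w‖_{L^r} ≤ 1`; i.e. the identity from `L^q ∩ L^r` to
`L^q ∩ L^s` (with the sum norms) maps the closed unit ball onto a closed set:
it is a semi-embedding. -/
theorem Lq_inter_Lr_unit_ball_closed_in_Lq_inter_Ls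
    {α : Type*} [MeasurableSpace α] (μ : Measure α)
    (q r s : ℝ≥0∞) (hq : 1 ≤ q) (hq_top : q < ⊤) (hr : 1 ≤ r) (hrs : r < s)
    (v : ℕ → α → ℝ) (hv : ∀ k, AEStronglyMeasurable (v k) μ)
    (hball : ∀ k, eLpNorm (v k) q μ + eLpNorm (v k) r μ ≤ 1)
    (w : α → ℝ) (hw : AEStronglyMeasurable w μ) (hws : eLpNorm w s μ < ⊤)
    (hconv : Tendsto (fun k => eLpNorm (v k - w) q μ + eLpNorm (v k - w) s μ)
      atTop (𝓝 0)) :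
    eLpNorm w r μ < ⊤ ∧ eLpNorm w q μ + eLpNorm w r μ ≤ 1 :=
  Lq_inter_Lr_unit_ball_closed_in_Lq_inter_Ls_general μ q r s hq v hv hball w hw hconv
end
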